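/- Let N' be obtained from a network N by an E4 operation (adding a new species Y into some existing reactions and adding the inflow-outflow pair 0 <-> Y). Then delta(N') - delta(N) = -(cyc(N') - cyc(N)) + 1, and moreover delta(N') - delta(N) >= 0. -/

import Mathlib

open Submodule

/-- A complex on `s` species: a vector of nonnegative integers. -/
abbrev Cplx (s : ℕ) := Fin s → ℕ

/-- The real vector associated to a complex. -/
def toR {s : ℕ} (C : Cplx s) : Fin s → ℝ := fun i => (C i : ℝ)

/-- A chemical reaction network on `s` species, given by its set of reactions
(ordered pairs of distinct complexes). -/
structure Network (s : ℕ) where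
  reactions : Finset (Cplx s × Cplx s)
  ne : ∀ r ∈ reactions, r.1 ≠ r.2

namespace Network

variable {s : ℕ}

/-- The complexes of a network: all sources and targets of reactions. -/
def complexes (N : Network s) : Finset (Cplx s) :=
  N.reactions.image Prod.fst ∪ N.reactions.image Prod.snd

/-- One (undirected) step in the reaction graph. -/
def step (N : Network s) (C D : Cplx s) : Prop :=
  (C, D) ∈ N.reactions ∨ (D, C) ∈ N.reactions

/-- Being connected by a path in the undirected reaction graph. -/
def linked (N : Network s) : Cplx s → Cplx s → Prop :=
  Relation.ReflTransGen N.step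

/-- `C` and `D` are complexes of `N` lying in a common linkage class. -/
def sameLinkageClass (N : Network s) (C D : Cplx s) : Prop :=
  C ∈ N.complexes ∧ D ∈ N.complexes ∧ N.linked C D

/-- The linkage class of a complex `C`. -/
def linkageClass (N : Network s) (C : Cplx s) : Set (Cplx s) :=
  {D | N.linked C D}

/-- The number of complexes `c_N`. -/
def numComplexes (N : Network s) : ℕ := N.complexes.card

/-- The number of linkage classes `ℓ_N`. -/
noncomputable def numLinkage (N : Network s) : ℕ :=
  Set.ncard {S : Set (Cplx s) | ∃ C ∈ N.complexes, S = N.linkageClass C}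

/-- The number of reactions `r_N`. -/
def numReactions (N : Network s) : ℕ := N.reactions.card

/-- The stoichiometric subspace: the real span of all reaction vectors. -/
def stoichSubspace (N : Network s) : Submodule ℝ (Fin s → ℝ) :=
  Submodule.span ℝ {v | ∃ r ∈ N.reactions, v = toR r.2 - toR r.1}

/-- The rank of the network. -/
noncomputable def rank (N : Network s) : ℕ :=
  Module.finrank ℝ N.stoichSubspace

/-- The deficiency `δ(N) = c_N - ℓ_N - rk(N)`. -/
noncomputable def deficiency (N : Network s) : ℤ :=
  (N.numComplexes : ℤ) - N.numLinkage - N.rank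

/-- The cyclomatic number `cyc(N) = r_N - c_N + ℓ_N`. -/
noncomputable def cyc (N : Network s) : ℤ :=
  (N.numReactions : ℤ) - N.numComplexes + N.numLinkage

end Network

/-- Delete the coordinate of the new species `Y` (the last species). -/
def proj {s : ℕ} (C : Cplx (s + 1)) : Cplx s := fun i => C i.castSucc

/-!
The number of complexes minus the number of linkage classes is the rank of the incidence matrix
of the reaction graph, so `δ = dim I - rk` and `cyc = r - dim I`, where `I` is the column space
of the incidence matrix. Forgetting the new species `Y` maps both the reaction vectors and the
incidence columns of `N'` onto those of `N`, the pair `0 ⇄ Y` going to zero. On the stoichiometric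
side the kernel is exactly the line through `Y` (which is the reaction vector of `0 → Y`), so
`rk' = rk + 1`; on the incidence side the kernel contains `e_Y - e_0 ≠ 0`, so `dim I' ≥ dim I + 1`.
With `r' = r + 2` both claims follow by arithmetic.
-/

open Module Finsupp

theorem Submodule.finrank_map_add_finrank_inf_ker {K V W : Type*} [Field K] [AddCommGroup V]
    [Module K V] [AddCommGroup W] [Module K W] (f : V →ₗ[K] W) (p : Submodule K V)
    [FiniteDimensional K p] :
    finrank K (p.map f) + finrank K (p ⊓ LinearMap.ker f : Submodule K V) = finrank K p := by
  have h := LinearMap.finrank_range_add_finrank_ker (f.comp p.subtype)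
  rw [LinearMap.range_comp, Submodule.range_subtype, LinearMap.ker_comp] at h
  rwa [← Submodule.map_comap_subtype,
    ← (Submodule.equivMapOfInjective p.subtype p.injective_subtype _).finrank_eq]

instance Finsupp.finiteDimensional_supported {K α : Type*} [Field K] (S : Finset α) :
    FiniteDimensional K (supported K K (S : Set α)) :=
  (supportedEquivFinsupp (S : Set α)).symm.finiteDimensional

theorem Finsupp.finrank_supported {K α : Type*} [Field K] (S : Finset α) :
    finrank K (supported K K (S : Set α)) = S.card := by
  rw [(supportedEquivFinsupp (S : Set α)).finrank_eq, finrank_finsupp_self]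
  simp

theorem LinearMap.ker_funLeft_castSucc {R : Type*} [Semiring R] (s : ℕ) :
    ker (funLeft R R (Fin.castSucc : Fin s → Fin (s + 1))) = R ∙ Pi.single (Fin.last s) 1 := by
  ext x
  rw [mem_ker, mem_span_singleton]
  constructor
  · intro hx
    refine ⟨x (Fin.last s), funext fun i => ?_⟩
    induction i using Fin.lastCases with
    | last => simp
    | cast j => simpa [Pi.single_apply, (Fin.castSucc_lt_last j).ne] using (congrFun hx j).symm
  · rintro ⟨a, rfl⟩
    funext i
    simp [funLeft_apply, (Fin.castSucc_lt_last i).ne]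

@[simp]
theorem proj_zero (s : ℕ) : proj (0 : Cplx (s + 1)) = 0 :=
  rfl

@[simp]
theorem proj_single_last (s : ℕ) : proj (Pi.single (Fin.last s) 1 : Cplx (s + 1)) = 0 :=
  funext fun i => Pi.single_eq_of_ne (Fin.castSucc_lt_last i).ne 1

namespace Network

variable {s t : ℕ}

theorem linked_symm {N : Network s} {C D : Cplx s} (h : N.linked C D) : N.linked D C :=
  Relation.ReflTransGen.mono (fun _ _ hs => Or.symm hs) D C (Relation.ReflTransGen.swap D C h)

theorem linkageClass_eq_iff {N : Network s} {C D : Cplx s} :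
    N.linkageClass C = N.linkageClass D ↔ N.linked C D := by
  refine ⟨fun h => ?_, fun h => Set.ext fun E => ⟨(linked_symm h).trans, h.trans⟩⟩
  have hD : D ∈ N.linkageClass D := Relation.ReflTransGen.refl
  rwa [← h] at hD

theorem numLinkage_eq_card_image (N : Network s) :
    N.numLinkage = (N.complexes.image N.linkageClass).card := by
  rw [numLinkage, ← Set.ncard_coe_finset, Finset.coe_image]
  congr 1
  ext S
  simp [eq_comm]

section ReactionSpan

variable {M M' : Type*} [AddCommGroup M] [Module ℝ M] [AddCommGroup M'] [Module ℝ M']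

/-- For `g = toR` this is `stoichSubspace`, for `g = (single · 1)` it is `incidenceSpan`. -/
def reactionSpan (N : Network s) (g : Cplx s → M) : Submodule ℝ M :=
  span ℝ {v | ∃ r ∈ N.reactions, v = g r.2 - g r.1}

instance (N : Network s) (g : Cplx s → M) : FiniteDimensional ℝ (N.reactionSpan g) :=
  FiniteDimensional.span_of_finite ℝ <| (N.reactions.finite_toSet.image
    fun r => g r.2 - g r.1).subset fun _ ⟨r, hr, hv⟩ => ⟨r, hr, hv.symm⟩

theorem sub_mem_reactionSpan {N : Network s} {r : Cplx s × Cplx s} (hr : r ∈ N.reactions)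
    (g : Cplx s → M) : g r.2 - g r.1 ∈ N.reactionSpan g :=
  subset_span ⟨r, hr, rfl⟩

theorem map_reactionSpan {N : Network s} {N' : Network t} {π : Cplx t → Cplx s}
    {R : Finset (Cplx t × Cplx t)}
    (hN : N.reactions = (N'.reactions \ R).image fun r => (π r.1, π r.2))
    (hR : ∀ r ∈ R, π r.1 = π r.2) {g' : Cplx t → M'} {g : Cplx s → M} (f : M' →ₗ[ℝ] M)
    (hf : ∀ C, f (g' C) = g (π C)) :
    (N'.reactionSpan g').map f = N.reactionSpan g := by
  apply le_antisymm
  · rw [reactionSpan, map_span, span_le]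
    rintro _ ⟨_, ⟨r, hr, rfl⟩, rfl⟩
    rw [SetLike.mem_coe, map_sub, hf, hf]
    by_cases hrR : r ∈ R
    · rw [hR r hrR, sub_self]
      exact zero_mem _
    · have hπr : (π r.1, π r.2) ∈ N.reactions :=
        hN ▸ Finset.mem_image_of_mem _ (Finset.mem_sdiff.2 ⟨hr, hrR⟩)
      exact sub_mem_reactionSpan hπr g
  · rw [reactionSpan, span_le]
    rintro _ ⟨q, hq, rfl⟩
    obtain ⟨r, hr, rfl⟩ := Finset.mem_image.1 (hN ▸ hq)
    exact ⟨_, sub_mem_reactionSpan (Finset.mem_sdiff.1 hr).1 g', by rw [map_sub, hf, hf]⟩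

end ReactionSpan

/-- The column space of the incidence matrix of the reaction graph. -/
noncomputable abbrev incidenceSpan (N : Network s) : Submodule ℝ (Cplx s →₀ ℝ) :=
  N.reactionSpan fun C => single C 1

theorem single_sub_single_mem_incidenceSpan {N : Network s} {C D : Cplx s} (h : N.linked C D) :
    single D (1 : ℝ) - single C 1 ∈ N.incidenceSpan := by
  induction h with
  | refl => simp
  | @tail D E _ hDE ih =>
    have hstep : single E (1 : ℝ) - single D 1 ∈ N.incidenceSpan := by
      rcases hDE with hDE | hED
      · exact sub_mem_reactionSpan hDE _
      · simpa using neg_mem (sub_mem_reactionSpan hED (fun C => single C (1 : ℝ)))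
    simpa using add_mem hstep ih

theorem sub_mapDomain_mem_incidenceSpan {N : Network s} {f : Cplx s → Cplx s}
    (hf : ∀ C, N.linked C (f C)) (x : Cplx s →₀ ℝ) :
    x - mapDomain f x ∈ N.incidenceSpan := by
  induction x using Finsupp.induction_linear with
  | zero => simp
  | add x y hx hy => simpa [mapDomain_add, add_sub_add_comm] using add_mem hx hy
  | single C a =>
    have h := smul_mem _ (-a) (single_sub_single_mem_incidenceSpan (hf C))
    rw [mapDomain_single]
    simpa [smul_sub, sub_eq_add_neg, add_comm] using h

theorem incidenceSpan_eq_supported_inf_ker (N : Network s) :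
    N.incidenceSpan = supported ℝ ℝ (N.complexes : Set (Cplx s))
      ⊓ LinearMap.ker (lmapDomain ℝ ℝ N.linkageClass) := by
  apply le_antisymm
  · refine span_le.2 ?_
    rintro _ ⟨r, hr, rfl⟩
    refine ⟨sub_mem (single_mem_supported ℝ _ ?_) (single_mem_supported ℝ _ ?_), ?_⟩
    · exact Finset.mem_union_right _ (Finset.mem_image_of_mem _ hr)
    · exact Finset.mem_union_left _ (Finset.mem_image_of_mem _ hr)
    · have hcls : N.linkageClass r.1 = N.linkageClass r.2 :=
        linkageClass_eq_iff.2 (Relation.ReflTransGen.single (Or.inl hr))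
      simp [mapDomain_sub, mapDomain_single, hcls]
  · -- Moving each coordinate of `x` to a representative of its linkage class changes `x` by an
    -- element of the incidence span, and gives `0` when all class sums of `x` vanish.
    rintro x ⟨-, hx⟩
    set rep := Function.invFun N.linkageClass
    have hrep : ∀ C, N.linked C (rep (N.linkageClass C)) :=
      fun C => linkageClass_eq_iff.1 (Function.invFun_eq ⟨C, rfl⟩).symm
    have h := sub_mapDomain_mem_incidenceSpan (f := rep ∘ N.linkageClass) hrep x
    rwa [mapDomain_comp, show mapDomain N.linkageClass x = 0 from hx, mapDomain_zero,
      sub_zero] at h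

theorem numComplexes_eq_numLinkage_add_finrank_incidenceSpan (N : Network s) :
    N.numComplexes = N.numLinkage + finrank ℝ N.incidenceSpan := by
  have h := Submodule.finrank_map_add_finrank_inf_ker (lmapDomain ℝ ℝ N.linkageClass)
    (supported ℝ ℝ (N.complexes : Set (Cplx s)))
  rwa [lmapDomain_supported, ← Finset.coe_image, finrank_supported, finrank_supported,
    ← incidenceSpan_eq_supported_inf_ker, ← numLinkage_eq_card_image, eq_comm] at h

theorem deficiency_eq (N : Network s) :
    N.deficiency = finrank ℝ N.incidenceSpan - N.rank := by
  rw [deficiency, numComplexes_eq_numLinkage_add_finrank_incidenceSpan]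
  push_cast
  ring

theorem cyc_eq (N : Network s) :
    N.cyc = N.numReactions - finrank ℝ N.incidenceSpan := by
  rw [cyc, numComplexes_eq_numLinkage_add_finrank_incidenceSpan]
  push_cast
  ring

theorem card_reactions_eq_card_sdiff_add_two {N : Network s} {A B : Cplx s}
    (hAB : (A, B) ∈ N.reactions) (hBA : (B, A) ∈ N.reactions) :
    N.reactions.card = (N.reactions \ {(A, B), (B, A)}).card + 2 := by
  have hne : (A, B) ≠ (B, A) := fun h => N.ne _ hAB (Prod.ext_iff.1 h).1
  have hsub : {(A, B), (B, A)} ⊆ N.reactions := by simp [Finset.insert_subset_iff, hAB, hBA]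
  rw [← Finset.card_sdiff_add_card_eq_card hsub, Finset.card_pair hne]

section E4

variable {N : Network s} {N' : Network (s + 1)}

theorem proj_eq_of_mem_inflow_outflow {r : Cplx (s + 1) × Cplx (s + 1)}
    (hr : r ∈ ({((0 : Cplx (s + 1)), Pi.single (Fin.last s) 1), (Pi.single (Fin.last s) 1, 0)} :
      Finset _)) : proj r.1 = proj r.2 := by
  simp only [Finset.mem_insert, Finset.mem_singleton] at hr
  rcases hr with rfl | rfl <;> simp

theorem rank_eq_succ_of_E4
    (hin : ((0 : Cplx (s + 1)), Pi.single (Fin.last s) 1) ∈ N'.reactions)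
    (hproj : N.reactions = (N'.reactions \ {((0 : Cplx (s + 1)), Pi.single (Fin.last s) 1),
        (Pi.single (Fin.last s) 1, 0)}).image fun r => (proj r.1, proj r.2)) :
    N'.rank = N.rank + 1 := by
  have hmap : N'.stoichSubspace.map (LinearMap.funLeft ℝ ℝ Fin.castSucc) = N.stoichSubspace :=
    map_reactionSpan hproj (fun _ => proj_eq_of_mem_inflow_outflow) _ fun _ => rfl
  have he : Pi.single (Fin.last s) (1 : ℝ) ∈ N'.stoichSubspace := by
    have h : toR (Pi.single (Fin.last s) 1) - toR 0 ∈ N'.stoichSubspace :=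
      sub_mem_reactionSpan hin toR
    convert h using 1
    funext i
    by_cases hi : i = Fin.last s <;> simp [toR, hi]
  have hker : N'.stoichSubspace ⊓ LinearMap.ker (LinearMap.funLeft ℝ ℝ Fin.castSucc)
      = ℝ ∙ Pi.single (Fin.last s) 1 := by
    rw [LinearMap.ker_funLeft_castSucc]
    exact inf_eq_right.2 ((span_singleton_le_iff_mem _ _).2 he)
  have h := Submodule.finrank_map_add_finrank_inf_ker
    (LinearMap.funLeft ℝ ℝ Fin.castSucc) N'.stoichSubspace
  rw [hmap, hker, finrank_span_singleton (by simp)] at h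
  exact h.symm

theorem finrank_incidenceSpan_succ_le_of_E4
    (hin : ((0 : Cplx (s + 1)), Pi.single (Fin.last s) 1) ∈ N'.reactions)
    (hproj : N.reactions = (N'.reactions \ {((0 : Cplx (s + 1)), Pi.single (Fin.last s) 1),
        (Pi.single (Fin.last s) 1, 0)}).image fun r => (proj r.1, proj r.2)) :
    finrank ℝ N.incidenceSpan + 1 ≤ finrank ℝ N'.incidenceSpan := by
  have hmap : N'.incidenceSpan.map (lmapDomain ℝ ℝ proj) = N.incidenceSpan :=
    map_reactionSpan hproj (fun _ => proj_eq_of_mem_inflow_outflow) _ fun _ => mapDomain_single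
  have hw : single (Pi.single (Fin.last s) 1) (1 : ℝ) - single 0 1
      ∈ N'.incidenceSpan ⊓ LinearMap.ker (lmapDomain ℝ ℝ proj) :=
    ⟨sub_mem_reactionSpan hin _, by simp [mapDomain_sub, mapDomain_single]⟩
  have hw0 : single (Pi.single (Fin.last s) 1) (1 : ℝ) - single 0 1 ≠ 0 :=
    sub_ne_zero.2 fun h => N'.ne _ hin (single_left_injective one_ne_zero h).symm
  have hker := Submodule.one_le_finrank_iff.2 ((Submodule.ne_bot_iff _).2 ⟨_, hw, hw0⟩)
  have h := Submodule.finrank_map_add_finrank_inf_ker (lmapDomain ℝ ℝ proj) N'.incidenceSpan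
  rw [hmap] at h
  omega

end E4

end Network

theorem stmt10 {s : ℕ} (N : Network s) (N' : Network (s + 1))
    (Y : Cplx (s + 1)) (hY : Y = Pi.single (Fin.last s) 1)
    (hin : ((0 : Cplx (s + 1)), Y) ∈ N'.reactions)
    (hout : (Y, (0 : Cplx (s + 1))) ∈ N'.reactions)
    (hproj : N.reactions
        = (N'.reactions \ {((0 : Cplx (s + 1)), Y), (Y, 0)}).image
            fun r => (proj r.1, proj r.2))
    (hcard : (N'.reactions \ {((0 : Cplx (s + 1)), Y), (Y, 0)}).card = N.reactions.card) :
    N'.deficiency - N.deficiency = -(N'.cyc - N.cyc) + 1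
    ∧ 0 ≤ N'.deficiency - N.deficiency := by
  subst hY
  have hr := Network.card_reactions_eq_card_sdiff_add_two hin hout
  have hrk := Network.rank_eq_succ_of_E4 hin hproj
  have hE := Network.finrank_incidenceSpan_succ_le_of_E4 hin hproj
  rw [hcard] at hr
  rw [Network.deficiency_eq, Network.deficiency_eq, Network.cyc_eq, Network.cyc_eq,
    Network.numReactions, Network.numReactions]
  constructor <;> omega
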